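/- arXiv:1111.5100 — 2 statements merged into one kernel-verified Lean document; each statement's English description precedes it below -/
import Mathlib

section
/- Let K, L ⊆ ℝ² be smooth and strictly convex symmetric convex bodies. Then the quotient and immersion Finsler structures induced by L on ∂K coincide — i.e. for every x ∈ ∂K and every v ∈ ℝ² with f_x^K(v) = 0 one has inf_{t ∈ ℝ} gauge_L(v + t • x) = gauge_L(v) — if and only if L is homothetic to the isoperimetrix of K, i.e. there exists c > 0 such that L = c • J(K°), where J(x₁, x₂) = (−x₂, x₁) is the rotation by π/2 and K° = {y ∈ ℝ² : ⟨x,y⟩ ≤ 1 for all x ∈ K} is the polar body with respect to the standard inner product. -/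
open Set Pointwise

noncomputable section

variable {V : Type*} [NormedAddCommGroup V] [NormedSpace ℝ V]

/-- A symmetric convex body: compact, convex, `0` in the interior, centrally symmetric. -/
def IsSymmConvexBody (K : Set V) : Prop :=
  IsCompact K ∧ Convex ℝ K ∧ 0 ∈ interior K ∧ K = -K

/-- The boundary sphere `∂K = {x | gauge_K x = 1}` of a convex body. -/
def bodySphere (K : Set V) : Set V := {x | gauge K x = 1}

/-- `f` is a supporting functional of `K` at `x`: `f x = 1` and `f ≤ 1` on `K`. -/
def IsSupportFunctional (K : Set V) (x : V) (f : Module.Dual ℝ V) : Prop :=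
  f x = 1 ∧ ∀ y ∈ K, f y ≤ 1

/-- `K` is smooth: at every boundary point there is a unique supporting functional. -/
def IsSmoothBody (K : Set V) : Prop :=
  ∀ x ∈ bodySphere K, ∃! f : Module.Dual ℝ V, IsSupportFunctional K x f

/-- `K` is strictly convex: `∂K` contains no nondegenerate line segment. -/
def IsStrictlyConvexBody (K : Set V) : Prop :=
  ∀ x ∈ bodySphere K, ∀ y ∈ bodySphere K, segment ℝ x y ⊆ bodySphere K → x = y

open RealInnerProductSpace in
/-- The polar in `ℝ²` with respect to the standard inner product. -/
def polar2 (B : Set (EuclideanSpace ℝ (Fin 2))) : Set (EuclideanSpace ℝ (Fin 2)) :=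
  {y | ∀ x ∈ B, ⟪x, y⟫ ≤ 1}

/-- Rotation of the plane by `π/2`: `J(x₁, x₂) = (−x₂, x₁)`. -/
def rotJ (x : EuclideanSpace ℝ (Fin 2)) : EuclideanSpace ℝ (Fin 2) :=
  (WithLp.equiv 2 (Fin 2 → ℝ)).symm ![-x 1, x 0]

/-!
Write `h_K = supportFun K` and `J = rotJ`. The gauge of `L` is the support function `h_{L°}`
of its polar, and the gauge of `c • J(K°)` is `y ↦ h_K (-J y) / c`. For `L = c • J(K°)` the
condition thus reduces to `h_K (s • n) ≤ h_K (s • n + z)`, where `⟪n, ·⟫` supports `K` at `x`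
and `z ⊥ x`; both sides are compared with `|s|` by testing against `±x`.

Conversely let `F u = gauge L (J u)`. By Danskin's theorem, strict convexity of `K` makes `h_K`
differentiable off `0` with gradient the maximiser `x(u) ∈ ∂K` of `⟪u, ·⟫`, and smoothness of
`L` makes `gauge L` differentiable with gradient the maximiser `q` of `⟪J u, ·⟫` over `L°`.
The condition says that `t ↦ gauge L (J u + t • x(u))` is minimal at `0`, so `q ⊥ x(u)`, i.e.
`q ∥ J x(u)`, which forces `∇F(u) = (F u / h_K u) • ∇h_K(u)`. Hence `log F - log h_K` is
constant on the connected set `ℝ² \ {0}`, so `F = k • h_K` and `L = k⁻¹ • J(K°)`.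
-/

open RealInnerProductSpace Topology Filter

/-- For `v` tangent to `∂K` at `x`, the infimum is its norm in the quotient `V ⧸ ℝ x` and
`gauge L v` its norm in `V`. -/
def QuotientEqImmersion (K L : Set V) : Prop :=
  ∀ x ∈ bodySphere K, ∀ f : Module.Dual ℝ V, IsSupportFunctional K x f →
    ∀ v : V, f v = 0 → (⨅ t : ℝ, gauge L (v + t • x)) = gauge L v

theorem quotientEqImmersion_iff {K L : Set V} :
    QuotientEqImmersion K L ↔ ∀ x ∈ bodySphere K, ∀ f : Module.Dual ℝ V,
      IsSupportFunctional K x f → ∀ v : V, f v = 0 → ∀ t : ℝ, gauge L v ≤ gauge L (v + t • x) := by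
  have hbdd (v x : V) : BddBelow (range fun t : ℝ => gauge L (v + t • x)) :=
    ⟨0, by rintro _ ⟨t, rfl⟩; exact gauge_nonneg _⟩
  refine forall₂_congr fun x _ => forall₂_congr fun f _ => forall₂_congr fun v _ => ?_
  constructor
  · intro h t
    exact h ▸ ciInf_le (hbdd v x) t
  · intro h
    exact le_antisymm (by simpa using ciInf_le (hbdd v x) 0) (le_ciInf h)

section Gauge

variable {B : Set V}

theorem apply_le_gauge_of_forall_le_one (hB : Absorbent ℝ B) {f : Module.Dual ℝ V}
    (hf : ∀ y ∈ B, f y ≤ 1) (w : V) : f w ≤ gauge B w := by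
  refine le_of_forall_gt_imp_ge_of_dense fun r hr => ?_
  obtain ⟨b, hb, hbr, y, hy, rfl⟩ := exists_lt_of_gauge_lt hB hr
  rw [map_smul, smul_eq_mul]
  exact (mul_le_of_le_one_right hb.le (hf y hy)).trans hbr.le

theorem mem_bodySphere_of_isSupportFunctional (hB : Absorbent ℝ B) {x : V} (hx : x ∈ B)
    {f : Module.Dual ℝ V} (hf : IsSupportFunctional B x f) : x ∈ bodySphere B :=
  le_antisymm (gauge_le_one_of_mem hx) (hf.1 ▸ apply_le_gauge_of_forall_le_one hB hf.2 x)

theorem inv_gauge_smul_mem_bodySphere {w : V} (hw : 0 < gauge B w) :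
    (gauge B w)⁻¹ • w ∈ bodySphere B := by
  show gauge B _ = 1
  rw [gauge_smul_of_nonneg (inv_nonneg.2 hw.le), smul_eq_mul, inv_mul_cancel₀ hw.ne']

theorem exists_isSupportFunctional (hc : Convex ℝ B) (h0 : (0 : V) ∈ interior B) {x : V}
    (hx : x ∈ bodySphere B) : ∃ f : StrongDual ℝ V, IsSupportFunctional B x f := by
  have hxint : x ∉ interior B := fun h => (interior_subset_gauge_lt_one B h).ne hx
  obtain ⟨f, hf⟩ := geometric_hahn_banach_open_point hc.interior isOpen_interior hxint
  have hfx : 0 < f x := by simpa using hf 0 h0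
  have hle : B ⊆ {y | f y ≤ f x} := by
    have := closure_minimal (fun y hy => (hf y hy).le) (isClosed_le f.continuous continuous_const)
    rw [hc.closure_interior_eq_closure_of_nonempty_interior ⟨0, h0⟩] at this
    exact subset_closure.trans this
  refine ⟨(f x)⁻¹ • f, ?_, fun y hy => ?_⟩
  · simp [hfx.ne']
  · simpa [inv_mul_le_iff₀ hfx] using hle hy

theorem gauge_setOf_le {h : V → ℝ} (h_nonneg : ∀ u, 0 ≤ h u)
    (h_smul : ∀ c : ℝ, 0 < c → ∀ u, h (c • u) = c * h u) {a : ℝ} (ha : 0 < a) (u : V) :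
    gauge {v | h v ≤ a} u = h u / a := by
  have hmem {r : ℝ} (hr : 0 < r) : u ∈ r • {v | h v ≤ a} ↔ h u / a ≤ r := by
    rw [mem_smul_set_iff_inv_smul_mem₀ hr.ne', mem_ofPred_eq, h_smul _ (inv_pos.2 hr),
      inv_mul_le_iff₀ hr, div_le_iff₀ ha]
  apply le_antisymm
  · refine le_of_forall_gt_imp_ge_of_dense fun r hr => ?_
    have hr0 : 0 < r := (div_nonneg (h_nonneg u) ha.le).trans_lt hr
    exact gauge_le_of_mem hr0.le ((hmem hr0).2 hr.le)
  · have hpos : 0 < h u / a + 1 := by have := div_nonneg (h_nonneg u) ha.le; linarith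
    rw [gauge_def]
    exact le_csInf ⟨_, hpos, (hmem hpos).2 (by linarith)⟩ fun r ⟨hr, hu⟩ => (hmem hr).1 hu

end Gauge

section Body

variable {B : Set V}

theorem IsSymmConvexBody.mem_nhds_zero (hB : IsSymmConvexBody B) : B ∈ 𝓝 (0 : V) :=
  mem_interior_iff_mem_nhds.1 hB.2.2.1

theorem IsSymmConvexBody.zero_mem (hB : IsSymmConvexBody B) : (0 : V) ∈ B :=
  interior_subset hB.2.2.1

theorem IsSymmConvexBody.absorbent (hB : IsSymmConvexBody B) : Absorbent ℝ B :=
  absorbent_nhds_zero hB.mem_nhds_zero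

theorem IsSymmConvexBody.gauge_le_one_iff (hB : IsSymmConvexBody B) {x : V} :
    gauge B x ≤ 1 ↔ x ∈ B := by
  rw [gauge_le_one_iff_mem_closure hB.2.1 hB.mem_nhds_zero, hB.1.isClosed.closure_eq]

theorem IsSymmConvexBody.gauge_pos (hB : IsSymmConvexBody B) {x : V} (hx : x ≠ 0) :
    0 < gauge B x :=
  (_root_.gauge_pos hB.absorbent (NormedSpace.isVonNBounded_of_isBounded ℝ hB.1.isBounded)).2 hx

theorem IsSymmConvexBody.neg_mem (hB : IsSymmConvexBody B) {x : V} (hx : x ∈ B) : -x ∈ B := by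
  rw [hB.2.2.2] at hx
  exact hx

end Body

section SupportFunction

variable {E : Type*} [NormedAddCommGroup E] [InnerProductSpace ℝ E] {C : Set E}

def supportFun (C : Set E) (u : E) : ℝ := sSup ((fun z => ⟪u, z⟫) '' C)

theorem IsCompact.bddAbove_inner_image (hC : IsCompact C) (u : E) :
    BddAbove ((fun z => ⟪u, z⟫) '' C) :=
  hC.bddAbove_image (continuous_const.inner continuous_id).continuousOn

theorem inner_le_supportFun (hC : IsCompact C) {z : E} (hz : z ∈ C) (u : E) :
    ⟪u, z⟫ ≤ supportFun C u :=
  le_csSup (hC.bddAbove_inner_image u) (mem_image_of_mem _ hz)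

theorem supportFun_le_iff (hC : IsCompact C) (hne : C.Nonempty) {u : E} {a : ℝ} :
    supportFun C u ≤ a ↔ ∀ z ∈ C, ⟪u, z⟫ ≤ a := by
  rw [supportFun, csSup_le_iff (hC.bddAbove_inner_image u) (hne.image _), forall_mem_image]

theorem IsCompact.exists_inner_eq_supportFun (hC : IsCompact C) (hne : C.Nonempty) (u : E) :
    ∃ z ∈ C, ⟪u, z⟫ = supportFun C u := by
  obtain ⟨z, hz, hmax⟩ :=
    hC.exists_isMaxOn hne (f := fun z => ⟪u, z⟫) (continuous_const.inner continuous_id).continuousOn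
  exact ⟨z, hz, le_antisymm (inner_le_supportFun hC hz u) ((supportFun_le_iff hC hne).2 hmax)⟩

theorem IsCompact.continuous_supportFun (hC : IsCompact C) : Continuous (supportFun C) :=
  hC.continuous_sSup (f := fun u z => ⟪u, z⟫) continuous_inner

theorem supportFun_zero (hne : C.Nonempty) : supportFun C 0 = 0 := by
  simp [supportFun, hne.image_const]

theorem supportFun_smul (C : Set E) {c : ℝ} (hc : 0 ≤ c) (u : E) :
    supportFun C (c • u) = c * supportFun C u := by
  have : (fun z => ⟪c • u, z⟫) '' C = c • (fun z => ⟪u, z⟫) '' C := by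
    simp only [real_inner_smul_left, ← smul_eq_mul, ← image_smul, image_image]
  rw [supportFun, this, Real.sSup_smul_of_nonneg hc, smul_eq_mul, supportFun]

theorem supportFun_nonneg (hC : IsCompact C) (h0 : (0 : E) ∈ C) (u : E) : 0 ≤ supportFun C u := by
  simpa using inner_le_supportFun hC h0 u

theorem supportFun_pos (hC : IsCompact C) (h0 : C ∈ 𝓝 (0 : E)) {u : E} (hu : u ≠ 0) :
    0 < supportFun C u := by
  have hsmall : ∀ᶠ t in 𝓝[>] (0 : ℝ), t • u ∈ C :=
    nhdsWithin_le_nhds (((continuous_id.smul continuous_const).tendsto' 0 0 (zero_smul ℝ u)) h0)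
  obtain ⟨t, htC, ht⟩ := (hsmall.and self_mem_nhdsWithin).exists
  calc 0 < t * ‖u‖ ^ 2 := by have : 0 < t := ht; positivity
    _ = ⟪u, t • u⟫ := by rw [real_inner_smul_right, real_inner_self_eq_norm_sq]
    _ ≤ supportFun C u := inner_le_supportFun hC htC u

theorem isSupportFunctional_of_inner_eq_supportFun (hC : IsCompact C) (h0 : C ∈ 𝓝 (0 : E))
    {u x : E} (hu : u ≠ 0) (hxu : ⟪u, x⟫ = supportFun C u) :
    IsSupportFunctional C x (innerₗ E ((supportFun C u)⁻¹ • u)) := by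
  have hpos := supportFun_pos hC h0 hu
  refine ⟨?_, fun y hy => ?_⟩
  · simp [hxu, hpos.ne']
  · simpa [real_inner_smul_left, inv_mul_le_iff₀ hpos] using inner_le_supportFun hC hy u

theorem supportFun_smul_le_supportFun_add (hC : IsCompact C) (hsymm : ∀ z ∈ C, -z ∈ C)
    {n x z : E} (hn : ∀ y ∈ C, ⟪n, y⟫ ≤ 1) (hx : x ∈ C) (hnx : ⟪n, x⟫ = 1) (hzx : ⟪z, x⟫ = 0)
    (s : ℝ) : supportFun C (s • n) ≤ supportFun C (s • n + z) := by
  calc supportFun C (s • n) ≤ |s| := by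
        refine (supportFun_le_iff hC ⟨x, hx⟩).2 fun y hy => ?_
        have h1 := hn y hy
        have h2 := hn (-y) (hsymm y hy)
        rw [inner_neg_right] at h2
        rw [real_inner_smul_left]
        cases abs_cases s <;> nlinarith
    _ ≤ supportFun C (s • n + z) := by
        rcases abs_cases s with ⟨hs, -⟩ | ⟨hs, -⟩
        · calc |s| = ⟪s • n + z, x⟫ := by
                simp [hs, inner_add_left, real_inner_smul_left, hnx, hzx]
            _ ≤ _ := inner_le_supportFun hC hx _
        · calc |s| = ⟪s • n + z, -x⟫ := by
                simp [hs, inner_add_left, real_inner_smul_left, hnx, hzx]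
            _ ≤ _ := inner_le_supportFun hC (hsymm x hx) _

theorem eventually_norm_sub_lt_of_inner_eq_supportFun (hC : IsCompact C) {u₀ q₀ : E}
    (huniq : ∀ q ∈ C, ⟪u₀, q⟫ = supportFun C u₀ → q = q₀) {ε : ℝ} (hε : 0 < ε) :
    ∀ᶠ u in 𝓝 u₀, ∀ q ∈ C, ⟪u, q⟫ = supportFun C u → ‖q - q₀‖ < ε := by
  have hD : IsCompact (C ∩ {q | ε ≤ ‖q - q₀‖}) :=
    hC.inter_right (isClosed_le continuous_const (by fun_prop))
  have hgap : ∀ᶠ u in 𝓝 u₀, ∀ q ∈ C ∩ {q | ε ≤ ‖q - q₀‖}, ⟪u, q⟫ < supportFun C u := by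
    refine hD.eventually_forall_of_forall_eventually fun q ⟨hq, (hfar : ε ≤ ‖q - q₀‖)⟩ => ?_
    have hlt : ⟪u₀, q⟫ < supportFun C u₀ := (inner_le_supportFun hC hq u₀).lt_of_ne fun h => by
      rw [huniq q hq h, sub_self, norm_zero] at hfar
      linarith
    exact ContinuousAt.eventually_lt (f := fun p : E × E => ⟪p.1, p.2⟫)
      (g := fun p => supportFun C p.1) continuous_inner.continuousAt
      (hC.continuous_supportFun.comp continuous_fst).continuousAt hlt
  filter_upwards [hgap] with u hu q hq hmax
  by_contra! hfar
  exact (hu q ⟨hq, hfar⟩).ne hmax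

/-- Danskin's theorem. -/
theorem hasFDerivAt_supportFun (hC : IsCompact C) {u₀ q₀ : E} (hq₀ : q₀ ∈ C)
    (hmax : ⟪u₀, q₀⟫ = supportFun C u₀) (huniq : ∀ q ∈ C, ⟪u₀, q⟫ = supportFun C u₀ → q = q₀) :
    HasFDerivAt (supportFun C) (innerSL ℝ q₀) u₀ := by
  rw [hasFDerivAt_iff_isLittleO_nhds_zero, Asymptotics.isLittleO_iff]
  intro c hc
  have hshift : Tendsto (fun k => u₀ + k) (𝓝 0) (𝓝 u₀) :=
    (continuous_const_add u₀).tendsto' 0 u₀ (add_zero u₀)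
  filter_upwards [hshift.eventually (eventually_norm_sub_lt_of_inner_eq_supportFun hC huniq hc)]
    with k hk
  obtain ⟨q, hq, hqmax⟩ := hC.exists_inner_eq_supportFun ⟨q₀, hq₀⟩ (u₀ + k)
  have hlow := inner_le_supportFun hC hq₀ (u₀ + k)
  have hup := inner_le_supportFun hC hq u₀
  have hkq : ⟪k, q - q₀⟫ ≤ ‖k‖ * c :=
    (real_inner_le_norm k _).trans (mul_le_mul_of_nonneg_left (hk q hq hqmax).le (norm_nonneg k))
  rw [innerSL_apply_apply, Real.norm_eq_abs, abs_le]
  rw [inner_add_left] at hlow hqmax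
  rw [inner_sub_right] at hkq
  constructor <;> nlinarith [real_inner_comm q₀ k, norm_nonneg k]

end SupportFunction

section Calculus

theorem HasFDerivAt.apply_eq_zero_of_forall_le_add_smul {g : V → ℝ} {g' : StrongDual ℝ V}
    {w : V} (hg : HasFDerivAt g g' w) {x : V} (hmin : ∀ t : ℝ, g w ≤ g (w + t • x)) : g' x = 0 := by
  have hline := hg.comp_hasDerivAt_of_eq 0 ((hasDerivAt_id 0).smul_const x |>.const_add w) (by simp)
  refine IsLocalMin.hasDerivAt_eq_zero ?_ (by simpa using hline)
  exact (isMinOn_univ_iff.2 fun t => by simpa using hmin t).isLocalMin univ_mem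

/-- `log F` and `log h` have the same derivative. -/
theorem IsOpen.exists_pos_eq_mul_of_hasFDerivAt {s : Set V} (hs : IsOpen s)
    (hs' : IsPreconnected s) {F h : V → ℝ} {h' : V → StrongDual ℝ V}
    (hF0 : ∀ u ∈ s, 0 < F u) (hh0 : ∀ u ∈ s, 0 < h u)
    (hh : ∀ u ∈ s, HasFDerivAt h (h' u) u)
    (hF : ∀ u ∈ s, HasFDerivAt F ((F u / h u) • h' u) u) :
    ∃ k > 0, ∀ u ∈ s, F u = k * h u := by
  have hlogF (u) (hu : u ∈ s) : HasFDerivAt (fun v => Real.log (F v)) ((h u)⁻¹ • h' u) u := by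
    convert (hF u hu).log (hF0 u hu).ne' using 1
    rw [smul_smul]
    field_simp [(hF0 u hu).ne']
  have hlogh (u) (hu : u ∈ s) : HasFDerivAt (fun v => Real.log (h v)) ((h u)⁻¹ • h' u) u :=
    (hh u hu).log (hh0 u hu).ne'
  obtain ⟨a, ha⟩ := hs.exists_eq_add_of_fderiv_eq hs'
    (fun u hu => (hlogF u hu).differentiableAt.differentiableWithinAt)
    (fun u hu => (hlogh u hu).differentiableAt.differentiableWithinAt)
    (fun u hu => (hlogF u hu).fderiv.trans (hlogh u hu).fderiv.symm)
  refine ⟨Real.exp a, Real.exp_pos a, fun u hu => ?_⟩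
  rw [← Real.exp_log (hF0 u hu), show Real.log (F u) = Real.log (h u) + a from ha hu,
    Real.exp_add, Real.exp_log (hh0 u hu), mul_comm]

end Calculus

local notation "ℝ²" => EuclideanSpace ℝ (Fin 2)

theorem inner_eq_fin_two (x y : ℝ²) : ⟪x, y⟫ = x 0 * y 0 + x 1 * y 1 := by
  simp [PiLp.inner_apply, Fin.sum_univ_two, mul_comm]

theorem rotJ_apply_zero (x : ℝ²) : rotJ x 0 = -x 1 := rfl

theorem rotJ_apply_one (x : ℝ²) : rotJ x 1 = x 0 := rfl

theorem rotJ_add (x y : ℝ²) : rotJ (x + y) = rotJ x + rotJ y := by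
  ext i; fin_cases i <;> simp [rotJ_apply_zero, rotJ_apply_one, add_comm]

theorem rotJ_smul (c : ℝ) (x : ℝ²) : rotJ (c • x) = c • rotJ x := by
  ext i; fin_cases i <;> simp [rotJ_apply_zero, rotJ_apply_one]

theorem rotJ_neg (x : ℝ²) : rotJ (-x) = -rotJ x := by
  simpa using rotJ_smul (-1) x

theorem rotJ_rotJ (x : ℝ²) : rotJ (rotJ x) = -x := by
  ext i; fin_cases i <;> simp [rotJ_apply_zero, rotJ_apply_one]

theorem rotJ_neg_rotJ (x : ℝ²) : rotJ (-rotJ x) = x := by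
  rw [rotJ_neg, rotJ_rotJ, neg_neg]

theorem rotJ_zero : rotJ 0 = 0 := by
  simpa using rotJ_smul 0 0

theorem rotJ_ne_zero {x : ℝ²} (hx : x ≠ 0) : rotJ x ≠ 0 := fun h =>
  hx (by simpa [h, rotJ_zero] using (rotJ_rotJ x).symm)

theorem inner_self_rotJ (x : ℝ²) : ⟪x, rotJ x⟫ = 0 := by
  rw [inner_eq_fin_two, rotJ_apply_zero, rotJ_apply_one]; ring

def rotJL : ℝ² →L[ℝ] ℝ² :=
  LinearMap.toContinuousLinearMap { toFun := rotJ, map_add' := rotJ_add, map_smul' := rotJ_smul }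

theorem hasFDerivAt_rotJ (u : ℝ²) : HasFDerivAt rotJ rotJL u :=
  rotJL.hasFDerivAt

/-- If `q ⊥ x` then `q` is a multiple of `rotJ x`. -/
theorem inner_rotJ_mul_inner_comm {q x : ℝ²} (hqx : ⟪q, x⟫ = 0) (u w : ℝ²) :
    ⟪q, rotJ w⟫ * ⟪x, u⟫ = ⟪q, rotJ u⟫ * ⟪x, w⟫ := by
  simp only [inner_eq_fin_two, rotJ_apply_zero, rotJ_apply_one] at hqx ⊢
  linear_combination (w 0 * u 1 - u 0 * w 1) * hqx

theorem neg_rotJ_eq_inner_smul {n v x : ℝ²} (hnv : ⟪n, v⟫ = 0) (hnx : ⟪n, x⟫ = 1) :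
    -rotJ v = ⟪-rotJ v, x⟫ • n := by
  simp only [inner_eq_fin_two] at hnv hnx
  ext i; fin_cases i <;> simp [inner_eq_fin_two, rotJ_apply_zero, rotJ_apply_one]
  · linear_combination x 1 * hnv - v 1 * hnx
  · linear_combination v 0 * hnx - x 0 * hnv

theorem exists_inner_eq_apply (f : Module.Dual ℝ ℝ²) : ∃ n : ℝ², ∀ y, f y = ⟪n, y⟫ :=
  ⟨(InnerProductSpace.toDual ℝ ℝ²).symm (LinearMap.toContinuousLinearMap f), fun y => by
    rw [InnerProductSpace.toDual_symm_apply, LinearMap.coe_toContinuousLinearMap']⟩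

section Polar

variable {K L : Set ℝ²}

theorem isCompact_polar2 (hL : L ∈ 𝓝 0) : IsCompact (polar2 L) := by
  obtain ⟨r, hr, hball⟩ := Metric.nhds_basis_closedBall.mem_iff.1 hL
  have hclosed : IsClosed (polar2 L) := by
    rw [show polar2 L = ⋂ x ∈ L, {y | ⟪x, y⟫ ≤ 1} by ext; simp [polar2]]
    exact isClosed_biInter fun x _ =>
      isClosed_le (continuous_const.inner continuous_id) continuous_const
  refine Metric.isCompact_of_isClosed_isBounded hclosed
    (isBounded_iff_forall_norm_le.2 ⟨r⁻¹, fun y hyL => ?_⟩)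
  rcases eq_or_ne y 0 with rfl | hy
  · simp [hr.le]
  have hy' : 0 < ‖y‖ := norm_pos_iff.2 hy
  have hz : (r / ‖y‖) • y ∈ L := hball (by simp [norm_smul, abs_of_pos hr, hy'.ne'])
  have := hyL _ hz
  rw [real_inner_smul_left, real_inner_self_eq_norm_sq] at this
  rw [le_inv_comm₀ hy' hr]
  field_simp at this ⊢
  nlinarith

theorem exists_mem_polar2_inner_eq_gauge (hL : IsSymmConvexBody L) (w : ℝ²) :
    ∃ q ∈ polar2 L, ⟪w, q⟫ = gauge L w := by
  rcases eq_or_ne w 0 with rfl | hw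
  · exact ⟨0, fun x _ => by simp, by simp⟩
  have hpos := hL.gauge_pos hw
  obtain ⟨f, hfp, hfL⟩ :=
    exists_isSupportFunctional hL.2.1 hL.2.2.1 (inv_gauge_smul_mem_bodySphere hpos)
  set q := (InnerProductSpace.toDual ℝ ℝ²).symm f
  have hq (y : ℝ²) : ⟪y, q⟫ = f y := by
    rw [real_inner_comm, InnerProductSpace.toDual_symm_apply]
  refine ⟨q, fun y hy => (hq y).trans_le (hfL y hy), ?_⟩
  simp only [ContinuousLinearMap.coe_coe, map_smul, smul_eq_mul] at hfp
  rw [hq, ← mul_inv_cancel_left₀ hpos.ne' (f w), hfp, mul_one]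

theorem gauge_eq_supportFun_polar2 (hL : IsSymmConvexBody L) :
    gauge L = supportFun (polar2 L) := by
  have hcpt := isCompact_polar2 hL.mem_nhds_zero
  funext w
  obtain ⟨q, hq, hqw⟩ := exists_mem_polar2_inner_eq_gauge hL w
  refine le_antisymm (hqw ▸ inner_le_supportFun hcpt hq w)
    ((supportFun_le_iff hcpt ⟨q, hq⟩).2 fun p hp => ?_)
  have := apply_le_gauge_of_forall_le_one hL.absorbent (f := innerₗ ℝ² p)
    (fun y hy => by simpa [real_inner_comm] using hp y hy) w
  rwa [innerₗ_apply_apply, real_inner_comm] at this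

theorem polar2_eq_setOf_supportFun_le (hK : IsCompact K) (hne : K.Nonempty) :
    polar2 K = {u | supportFun K u ≤ 1} := by
  ext u
  simp only [polar2, mem_ofPred_eq, supportFun_le_iff hK hne, real_inner_comm u]

theorem smul_rotJ_image_polar2 (hK : IsSymmConvexBody K) {c : ℝ} (hc : 0 < c) :
    c • (rotJ '' polar2 K) = {y | supportFun K (-rotJ y) ≤ c} := by
  have hJ : rotJ '' polar2 K = (fun y => -rotJ y) ⁻¹' polar2 K := by
    rw [image_eq_preimage_of_inverse (fun x => by simp [rotJ_rotJ]) rotJ_neg_rotJ]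
  ext y
  rw [mem_smul_set_iff_inv_smul_mem₀ hc.ne', hJ, mem_preimage,
    polar2_eq_setOf_supportFun_le hK.1 ⟨0, hK.zero_mem⟩, mem_ofPred_eq, mem_ofPred_eq,
    rotJ_smul, ← smul_neg, supportFun_smul K (inv_nonneg.2 hc.le), inv_mul_le_iff₀ hc, mul_one]

theorem gauge_smul_rotJ_image_polar2 (hK : IsSymmConvexBody K) {c : ℝ} (hc : 0 < c) (y : ℝ²) :
    gauge (c • (rotJ '' polar2 K)) y = supportFun K (-rotJ y) / c := by
  rw [smul_rotJ_image_polar2 hK hc]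
  refine gauge_setOf_le (fun u => supportFun_nonneg hK.1 hK.zero_mem _)
    (fun a ha u => ?_) hc y
  rw [rotJ_smul, ← smul_neg, supportFun_smul K ha.le]

theorem IsSmoothBody.eq_of_inner_eq_gauge (hL : IsSymmConvexBody L) (hLsm : IsSmoothBody L)
    {w q q' : ℝ²} (hw : w ≠ 0) (hq : q ∈ polar2 L) (hq' : q' ∈ polar2 L)
    (hqw : ⟪w, q⟫ = gauge L w) (hq'w : ⟪w, q'⟫ = gauge L w) : q = q' := by
  have hpos := hL.gauge_pos hw
  have hsupp {p : ℝ²} (hp : p ∈ polar2 L) (hpw : ⟪w, p⟫ = gauge L w) :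
      IsSupportFunctional L ((gauge L w)⁻¹ • w) (innerₗ ℝ² p) := by
    refine ⟨?_, fun y hy => ?_⟩
    · show ⟪p, (gauge L w)⁻¹ • w⟫ = 1
      rw [real_inner_smul_right, real_inner_comm, hpw, inv_mul_cancel₀ hpos.ne']
    · simpa [real_inner_comm] using hp y hy
  obtain ⟨f, -, hf⟩ := hLsm _ (inv_gauge_smul_mem_bodySphere hpos)
  have := (hf _ (hsupp hq hqw)).trans (hf _ (hsupp hq' hq'w)).symm
  exact ext_inner_right ℝ fun v => LinearMap.congr_fun this v

theorem IsSmoothBody.hasFDerivAt_gauge (hL : IsSymmConvexBody L) (hLsm : IsSmoothBody L)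
    {w q : ℝ²} (hw : w ≠ 0) (hq : q ∈ polar2 L) (hqw : ⟪w, q⟫ = gauge L w) :
    HasFDerivAt (gauge L) (innerSL ℝ q) w := by
  have huniq (p : ℝ²) (hp : p ∈ polar2 L) (hpw : ⟪w, p⟫ = supportFun (polar2 L) w) : p = q :=
    hLsm.eq_of_inner_eq_gauge hL hw hp hq (by rwa [gauge_eq_supportFun_polar2 hL]) hqw
  rw [gauge_eq_supportFun_polar2 hL] at hqw ⊢
  exact hasFDerivAt_supportFun (isCompact_polar2 hL.mem_nhds_zero) hq hqw huniq

theorem IsStrictlyConvexBody.eq_of_inner_eq_supportFun (hK : IsSymmConvexBody K)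
    (hKsc : IsStrictlyConvexBody K) {u x y : ℝ²} (hu : u ≠ 0) (hx : x ∈ K) (hy : y ∈ K)
    (hxu : ⟪u, x⟫ = supportFun K u) (hyu : ⟪u, y⟫ = supportFun K u) : x = y := by
  have hsphere {z : ℝ²} (hz : z ∈ K) (hzu : ⟪u, z⟫ = supportFun K u) : z ∈ bodySphere K :=
    mem_bodySphere_of_isSupportFunctional hK.absorbent hz
      (isSupportFunctional_of_inner_eq_supportFun hK.1 hK.mem_nhds_zero hu hzu)
  refine hKsc x (hsphere hx hxu) y (hsphere hy hyu) ?_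
  rintro _ ⟨a, b, ha, hb, hab, rfl⟩
  refine hsphere (hK.2.1 hx hy ha hb hab) ?_
  rw [inner_add_right, real_inner_smul_right, real_inner_smul_right, hxu, hyu, ← add_mul, hab,
    one_mul]

end Polar

section Isoperimetrix

variable {K L : Set ℝ²}

theorem QuotientEqImmersion.hasFDerivAt_gauge_rotJ (hK : IsSymmConvexBody K)
    (hL : IsSymmConvexBody L) (hLsm : IsSmoothBody L) (h : QuotientEqImmersion K L)
    {u x : ℝ²} (hu : u ≠ 0) (hx : x ∈ K) (hxu : ⟪u, x⟫ = supportFun K u) :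
    HasFDerivAt (fun w => gauge L (rotJ w))
      ((gauge L (rotJ u) / supportFun K u) • innerSL ℝ x) u := by
  obtain ⟨q, hq, hqu⟩ := exists_mem_polar2_inner_eq_gauge hL (rotJ u)
  have hdiff := hLsm.hasFDerivAt_gauge hL (rotJ_ne_zero hu) hq hqu
  have hsupp := isSupportFunctional_of_inner_eq_supportFun hK.1 hK.mem_nhds_zero hu hxu
  have hmin := quotientEqImmersion_iff.1 h x
    (mem_bodySphere_of_isSupportFunctional hK.absorbent hx hsupp) _ hsupp (rotJ u)
    (by simp [inner_self_rotJ])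
  have hqx : ⟪q, x⟫ = 0 := hdiff.apply_eq_zero_of_forall_le_add_smul hmin
  have hpos := supportFun_pos hK.1 hK.mem_nhds_zero hu
  refine (hdiff.comp u (hasFDerivAt_rotJ u)).congr_fderiv (ContinuousLinearMap.ext fun w => ?_)
  show ⟪q, rotJ w⟫ = gauge L (rotJ u) / supportFun K u * ⟪x, w⟫
  rw [← hqu, ← hxu, real_inner_comm q, div_mul_eq_mul_div, eq_div_iff (hxu ▸ hpos.ne'),
    real_inner_comm x]
  exact inner_rotJ_mul_inner_comm hqx u w

theorem QuotientEqImmersion.exists_eq_smul_rotJ_image_polar2 (hK : IsSymmConvexBody K)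
    (hL : IsSymmConvexBody L) (hKsc : IsStrictlyConvexBody K) (hLsm : IsSmoothBody L)
    (h : QuotientEqImmersion K L) : ∃ c : ℝ, 0 < c ∧ L = c • (rotJ '' polar2 K) := by
  have hne : K.Nonempty := ⟨0, hK.zero_mem⟩
  have hconn : IsPreconnected ({0}ᶜ : Set ℝ²) :=
    (isConnected_compl_singleton_of_one_lt_rank (by
      rw [← Module.finrank_eq_rank, finrank_euclideanSpace_fin]; norm_num) 0).isPreconnected
  choose x hxK hxu using hK.1.exists_inner_eq_supportFun hne
  obtain ⟨k, hk, hFk⟩ := isOpen_compl_singleton.exists_pos_eq_mul_of_hasFDerivAt hconn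
    (F := fun u => gauge L (rotJ u)) (h' := fun u => innerSL ℝ (x u))
    (fun u hu => hL.gauge_pos (rotJ_ne_zero hu))
    (fun u hu => supportFun_pos hK.1 hK.mem_nhds_zero hu)
    (fun u hu => hasFDerivAt_supportFun hK.1 (hxK u) (hxu u) fun y hy hyu =>
      hKsc.eq_of_inner_eq_supportFun hK hu hy (hxK u) hyu (hxu u))
    (fun u hu => h.hasFDerivAt_gauge_rotJ hK hL hLsm hu (hxK u) (hxu u))
  have hgauge (y : ℝ²) : gauge L y = k * supportFun K (-rotJ y) := by
    rcases eq_or_ne y 0 with rfl | hy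
    · simp [rotJ_zero, supportFun_zero hne]
    · simpa [rotJ_neg_rotJ] using hFk (-rotJ y) (by simpa using rotJ_ne_zero hy)
  refine ⟨k⁻¹, inv_pos.2 hk, ?_⟩
  ext y
  rw [smul_rotJ_image_polar2 hK (inv_pos.2 hk), mem_ofPred_eq, ← hL.gauge_le_one_iff, hgauge,
    mul_comm, ← le_div_iff₀ hk, one_div]

theorem quotientEqImmersion_smul_rotJ_image_polar2 (hK : IsSymmConvexBody K) {c : ℝ}
    (hc : 0 < c) : QuotientEqImmersion K (c • (rotJ '' polar2 K)) := by
  refine quotientEqImmersion_iff.2 fun x hx f hf v hfv t => ?_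
  obtain ⟨n, hn⟩ := exists_inner_eq_apply f
  have hnx : ⟪n, x⟫ = 1 := hn x ▸ hf.1
  have hw := neg_rotJ_eq_inner_smul (hn v ▸ hfv) hnx
  have hsplit : -rotJ (v + t • x) = -rotJ v + -(t • rotJ x) := by
    rw [rotJ_add, rotJ_smul, neg_add]
  have hperp : ⟪-(t • rotJ x), x⟫ = 0 := by
    rw [inner_neg_left, real_inner_comm, real_inner_smul_right, inner_self_rotJ, mul_zero, neg_zero]
  rw [gauge_smul_rotJ_image_polar2 hK hc, gauge_smul_rotJ_image_polar2 hK hc, hsplit, hw]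
  gcongr
  exact supportFun_smul_le_supportFun_add hK.1 (fun _ => hK.neg_mem)
    (fun y hy => hn y ▸ hf.2 y hy) (hK.gauge_le_one_iff.1 hx.le) hnx hperp _

end Isoperimetrix

theorem quotient_eq_immersion_iff_isoperimetrix_general
    (K L : Set (EuclideanSpace ℝ (Fin 2)))
    (hK : IsSymmConvexBody K) (hL : IsSymmConvexBody L)
    (hLsm : IsSmoothBody L)
    (hKsc : IsStrictlyConvexBody K) :
    (∀ x ∈ bodySphere K, ∀ f : Module.Dual ℝ (EuclideanSpace ℝ (Fin 2)),
        IsSupportFunctional K x f →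
        ∀ v : EuclideanSpace ℝ (Fin 2), f v = 0 →
          (⨅ t : ℝ, gauge L (v + t • x)) = gauge L v) ↔
      (∃ c : ℝ, 0 < c ∧ L = c • (rotJ '' polar2 K)) :=
  ⟨QuotientEqImmersion.exists_eq_smul_rotJ_image_polar2 hK hL hKsc hLsm,
    fun ⟨_, hc, hLc⟩ => hLc ▸ quotientEqImmersion_smul_rotJ_image_polar2 hK hc⟩

/-- For smooth strictly convex symmetric bodies `K, L ⊆ ℝ²`, the
quotient and immersion Finsler structures induced by `L` on `∂K` coincide iff `L` is
homothetic to the isoperimetrix of `K`, i.e. `L = c • J(K°)` for some `c > 0`. -/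
theorem quotient_eq_immersion_iff_isoperimetrix
    (K L : Set (EuclideanSpace ℝ (Fin 2)))
    (hK : IsSymmConvexBody K) (hL : IsSymmConvexBody L)
    (hKsm : IsSmoothBody K) (hLsm : IsSmoothBody L)
    (hKsc : IsStrictlyConvexBody K) (hLsc : IsStrictlyConvexBody L) :
    (∀ x ∈ bodySphere K, ∀ f : Module.Dual ℝ (EuclideanSpace ℝ (Fin 2)),
        IsSupportFunctional K x f →
        ∀ v : EuclideanSpace ℝ (Fin 2), f v = 0 →
          (⨅ t : ℝ, gauge L (v + t • x)) = gauge L v) ↔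
      (∃ c : ℝ, 0 < c ∧ L = c • (rotJ '' polar2 K)) :=
  quotient_eq_immersion_iff_isoperimetrix_general K L hK hL hLsm hKsc

end
end

section
/- Let V be a finite-dimensional real vector space. Let T, T' : V → V be linear maps with T ∘ T = 0 and T' ∘ T' = 0 and rank T = rank T', and let Λ, Λ' ⊆ V be subspaces with range T ⊆ Λ ⊆ ker T, range T' ⊆ Λ' ⊆ ker T', and dim Λ = dim Λ'. Then there exists an invertible linear map U : V → V such that U(Λ) = Λ' and U ∘ T ∘ U⁻¹ = T'. -/
/-!
Choose a complement `W` of `ker T`: then `T` kills `ker T` and maps `W` isomorphically onto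
`range T`. So an isomorphism `e : ker T ≃ ker T'` that restricts to an isomorphism
`range T ≃ range T'` extends, by `T'⁻¹ ∘ e ∘ T` on `W`, to an automorphism intertwining `T`
and `T'`. An `e` that also maps `Λ` onto `Λ'` is obtained by extending any isomorphism
`range T ≃ range T'` successively along `range T ≤ Λ ≤ ker T`; this needs only equal
dimensions at each step, which for `ker T` is rank–nullity.
-/

open Module Submodule LinearMap

namespace LinearEquiv

section Ring

variable {R V V' : Type*} [Ring R] [AddCommGroup V] [Module R V] [AddCommGroup V'] [Module R V']
  {p q : Submodule R V} {p' q' : Submodule R V'}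

noncomputable def ofIsCompl (h : IsCompl p q) (h' : IsCompl p' q') (e : p ≃ₗ[R] p')
    (f : q ≃ₗ[R] q') : V ≃ₗ[R] V' :=
  (prodEquivOfIsCompl p q h).symm ≪≫ₗ e.prodCongr f ≪≫ₗ prodEquivOfIsCompl p' q' h'

variable (h : IsCompl p q) (h' : IsCompl p' q') (e : p ≃ₗ[R] p') (f : q ≃ₗ[R] q')

@[simp]
theorem ofIsCompl_apply_left (x : p) : ofIsCompl h h' e f x = e x := by
  simp [ofIsCompl]

@[simp]
theorem ofIsCompl_apply_right (x : q) : ofIsCompl h h' e f x = f x := by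
  simp [ofIsCompl]

end Ring

variable {𝕜 V V' : Type*} [DivisionRing 𝕜] [AddCommGroup V] [Module 𝕜 V]
  [AddCommGroup V'] [Module 𝕜 V'] [FiniteDimensional 𝕜 V] [FiniteDimensional 𝕜 V']

theorem exists_extension {p : Submodule 𝕜 V} {p' : Submodule 𝕜 V'} (e : p ≃ₗ[𝕜] p')
    (h : finrank 𝕜 V = finrank 𝕜 V') : ∃ U : V ≃ₗ[𝕜] V', ∀ x : p, U x = e x := by
  obtain ⟨q, hq⟩ := p.exists_isCompl
  obtain ⟨q', hq'⟩ := p'.exists_isCompl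
  have hfinrank : finrank 𝕜 q = finrank 𝕜 q' := by
    have := finrank_add_eq_of_isCompl hq
    have := finrank_add_eq_of_isCompl hq'
    have := e.finrank_eq
    omega
  exact ⟨ofIsCompl hq hq' e (ofFinrankEq q q' hfinrank), ofIsCompl_apply_left hq hq' _ _⟩

theorem exists_extension_of_le {p q : Submodule 𝕜 V} {p' q' : Submodule 𝕜 V'} (hpq : p ≤ q)
    (hpq' : p' ≤ q') (e : p ≃ₗ[𝕜] p') (h : finrank 𝕜 q = finrank 𝕜 q') :
    ∃ U : q ≃ₗ[𝕜] q', ∀ x : p, (U (inclusion hpq x) : V') = e x := by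
  obtain ⟨U, hU⟩ := exists_extension
    (comapSubtypeEquivOfLe hpq ≪≫ₗ e ≪≫ₗ (comapSubtypeEquivOfLe hpq').symm) h
  exact ⟨U, fun x => congrArg Subtype.val (hU ⟨inclusion hpq x, x.2⟩)⟩

end LinearEquiv

namespace LinearMap

variable {𝕜 V V' : Type*} [DivisionRing 𝕜] [AddCommGroup V] [Module 𝕜 V]
  [AddCommGroup V'] [Module 𝕜 V']

noncomputable def complEquivRange (f : V →ₗ[𝕜] V') {W : Submodule 𝕜 V} (h : IsCompl (ker f) W) :
    W ≃ₗ[𝕜] range f :=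
  (quotientEquivOfIsCompl _ _ h).symm ≪≫ₗ f.quotKerEquivRange

@[simp]
theorem coe_complEquivRange_apply (f : V →ₗ[𝕜] V') {W : Submodule 𝕜 V} (h : IsCompl (ker f) W)
    (w : W) : (f.complEquivRange h w : V') = f w := by
  simp [complEquivRange]

theorem exists_linearEquiv_extension_intertwining {T : V →ₗ[𝕜] V} {T' : V' →ₗ[𝕜] V'}
    (hT : range T ≤ ker T) (eK : ker T ≃ₗ[𝕜] ker T') (eR : range T ≃ₗ[𝕜] range T')
    (hcompat : ∀ x : range T, (eK (inclusion hT x) : V') = eR x) :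
    ∃ U : V ≃ₗ[𝕜] V', (∀ x : ker T, U x = eK x) ∧ U ∘ₗ T = T' ∘ₗ U := by
  obtain ⟨W, hW⟩ := (ker T).exists_isCompl
  obtain ⟨W', hW'⟩ := (ker T').exists_isCompl
  let U := LinearEquiv.ofIsCompl hW hW' eK
    (T.complEquivRange hW ≪≫ₗ eR ≪≫ₗ (T'.complEquivRange hW').symm)
  refine ⟨U, LinearEquiv.ofIsCompl_apply_left hW hW' _ _, ?_⟩
  ext x
  obtain ⟨k, w, rfl, -⟩ := existsUnique_add_of_isCompl hW x
  have hUk : T' (U k) = 0 := by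
    rw [LinearEquiv.ofIsCompl_apply_left]
    exact (eK k).2
  have hUw : U (T w) = T' (U w) := calc
    U (T w) = eK (inclusion hT (T.complEquivRange hW w)) := by
      rw [← LinearEquiv.ofIsCompl_apply_left hW hW' eK, coe_inclusion,
        coe_complEquivRange_apply]
    _ = eR (T.complEquivRange hW w) := hcompat _
    _ = T' (U w) := by
      simp only [U, LinearEquiv.ofIsCompl_apply_right, LinearEquiv.trans_apply,
        ← coe_complEquivRange_apply T' hW', LinearEquiv.apply_symm_apply]
  simp [hUk, hUw]

end LinearMap

theorem exists_conjugating_automorphism_general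
    {V : Type*} [AddCommGroup V] [Module ℝ V] [FiniteDimensional ℝ V]
    (T T' : V →ₗ[ℝ] V)
    (hrank : Module.finrank ℝ (LinearMap.range T) = Module.finrank ℝ (LinearMap.range T'))
    (Λ Λ' : Submodule ℝ V)
    (hΛ1 : LinearMap.range T ≤ Λ) (hΛ2 : Λ ≤ LinearMap.ker T)
    (hΛ'1 : LinearMap.range T' ≤ Λ') (hΛ'2 : Λ' ≤ LinearMap.ker T')
    (hdim : Module.finrank ℝ Λ = Module.finrank ℝ Λ') :
    ∃ U : V ≃ₗ[ℝ] V, Λ.map (U : V →ₗ[ℝ] V) = Λ' ∧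
      (U : V →ₗ[ℝ] V) ∘ₗ T ∘ₗ (U.symm : V →ₗ[ℝ] V) = T' := by
  have hker : finrank ℝ (ker T) = finrank ℝ (ker T') := by
    have := T.finrank_range_add_finrank_ker
    have := T'.finrank_range_add_finrank_ker
    omega
  let eR := LinearEquiv.ofFinrankEq _ _ hrank
  obtain ⟨eΛ, heΛ⟩ := LinearEquiv.exists_extension_of_le hΛ1 hΛ'1 eR hdim
  obtain ⟨eK, heK⟩ := LinearEquiv.exists_extension_of_le hΛ2 hΛ'2 eΛ hker
  obtain ⟨U, hUK, hUT⟩ := exists_linearEquiv_extension_intertwining (hΛ1.trans hΛ2) eK eR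
    fun x => (heK _).trans (heΛ x)
  refine ⟨U, eq_of_le_of_finrank_eq ?_ (by rw [LinearEquiv.finrank_map_eq, hdim]), ?_⟩
  · rintro _ ⟨x, hx, rfl⟩
    have hUx : U x = eΛ ⟨x, hx⟩ := (hUK ⟨x, hΛ2 hx⟩).trans (heK ⟨x, hx⟩)
    exact hUx ▸ (eΛ ⟨x, hx⟩).2
  · rw [← comp_assoc, hUT, comp_assoc, LinearEquiv.comp_coe, U.symm_trans_self,
      LinearEquiv.refl_toLinearMap, comp_id]

/-- The `GL(V)`-orbits on the cotangent bundle of the Grassmannian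
are the strata of constant rank: if `T² = 0 = T'²`, `rank T = rank T'`,
`range T ⊆ Λ ⊆ ker T`, `range T' ⊆ Λ' ⊆ ker T'` and `dim Λ = dim Λ'`, then some
invertible `U : V → V` satisfies `U(Λ) = Λ'` and `U T U⁻¹ = T'`. -/
theorem exists_conjugating_automorphism
    {V : Type*} [AddCommGroup V] [Module ℝ V] [FiniteDimensional ℝ V]
    (T T' : V →ₗ[ℝ] V) (hT : T ∘ₗ T = 0) (hT' : T' ∘ₗ T' = 0)
    (hrank : Module.finrank ℝ (LinearMap.range T) = Module.finrank ℝ (LinearMap.range T'))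
    (Λ Λ' : Submodule ℝ V)
    (hΛ1 : LinearMap.range T ≤ Λ) (hΛ2 : Λ ≤ LinearMap.ker T)
    (hΛ'1 : LinearMap.range T' ≤ Λ') (hΛ'2 : Λ' ≤ LinearMap.ker T')
    (hdim : Module.finrank ℝ Λ = Module.finrank ℝ Λ') :
    ∃ U : V ≃ₗ[ℝ] V, Λ.map (U : V →ₗ[ℝ] V) = Λ' ∧
      (U : V →ₗ[ℝ] V) ∘ₗ T ∘ₗ (U.symm : V →ₗ[ℝ] V) = T' :=
  exists_conjugating_automorphism_general T T' hrank Λ Λ' hΛ1 hΛ2 hΛ'1 hΛ'2 hdim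
end
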